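/- Let G be a finite group, let P be a Sylow p-subgroup of G, let N be a normal subgroup of G, and let D be a subgroup of P with D ≤ N that is strongly closed in P with respect to G. Then G = N_G(D)·N, i.e. every element of G is a product of an element of the normalizer of D in G and an element of N. -/

import Mathlib

open Subgroup
open scoped commutatorElement

/-- The `p`-core `O_p(G)`: the largest normal `p`-subgroup of `G`. -/
noncomputable def pCore (p : ℕ) (G : Type*) [Group G] : Subgroup G :=
  ⨆ N ∈ {N : Subgroup G | N.Normal ∧ IsPGroup p N}, N

instance centralizer_subgroupOf_normalizer_normal {G : Type*} [Group G] (Q : Subgroup G) :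
    ((Subgroup.centralizer (Q : Set G)).subgroupOf (normalizer (Q : Set G))).Normal :=
  Q.normalizerMonoidHom_ker ▸ Q.normalizerMonoidHom.normal_ker

/-- `G` is `p`-stable: whenever `Q` is a `p`-subgroup, `g ∈ N_G(Q)` and `[Q,g,g] = 1`,
the coset `g C_G(Q)` lies in `O_p(N_G(Q)/C_G(Q))`. -/
def IsPStable (p : ℕ) (G : Type*) [Group G] : Prop :=
  ∀ (Q : Subgroup G), IsPGroup p Q → ∀ (g : G) (hg : g ∈ normalizer (Q : Set G)),
    (∀ q ∈ Q, ⁅⁅q, g⁆, g⁆ = 1) →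
    (QuotientGroup.mk (s := (Subgroup.centralizer (Q : Set G)).subgroupOf (normalizer (Q : Set G)))
        ⟨g, hg⟩) ∈
      pCore p (normalizer (Q : Set G) ⧸ (Subgroup.centralizer (Q : Set G)).subgroupOf (normalizer (Q : Set G)))

/-- `G` is `p`-nilpotent: it has a normal `p`-complement, i.e. a normal subgroup of order
coprime to `p` which is a complement to a Sylow `p`-subgroup. -/
def IsPNilpotent (p : ℕ) (G : Type*) [Group G] : Prop :=
  ∃ N : Subgroup G, N.Normal ∧ (Nat.card N).Coprime p ∧
    ∃ P : Sylow p G, N.IsComplement' P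

/-- `D` is strongly closed in `P` with respect to `G`. -/
def IsStronglyClosed {G : Type*} [Group G] (P D : Subgroup G) : Prop :=
  ∀ U : Set G, U ⊆ (D : Set G) → ∀ g : G,
    (fun u => g⁻¹ * u * g) '' U ⊆ (P : Set G) → (fun u => g⁻¹ * u * g) '' U ⊆ (D : Set G)

open Classical in
/-- `I_𝒜 = ⋂_{A ∈ 𝒜} A`, with the convention that `I_∅` is the trivial subgroup. -/
noncomputable def interA {G : Type*} [Group G] (𝒜 : Set (Subgroup G)) : Subgroup G :=
  if 𝒜 = ∅ then ⊥ else sInf 𝒜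

/-- `𝒜|Q`, the members of `𝒜` contained in `Q`. -/
def restrictA {G : Type*} [Group G] (𝒜 : Set (Subgroup G)) (Q : Subgroup G) :
    Set (Subgroup G) := {A ∈ 𝒜 | A ≤ Q}

/-- `A^b = b⁻¹ A b`. -/
def conjSub {G : Type*} [Group G] (A : Subgroup G) (b : G) : Subgroup G :=
  A.map (MulAut.conj b⁻¹).toMonoidHom

/-- `[A, b]`, the subgroup generated by the commutators `⁅a, b⁆` with `a ∈ A`. -/
def commSub {G : Type*} [Group G] (A : Subgroup G) (b : G) : Subgroup G :=
  Subgroup.closure {x | ∃ a ∈ A, x = ⁅a, b⁆}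

open Pointwise

/-!
`P ∩ N` is a Sylow `p`-subgroup of `N`, so the Frattini argument gives `G = N_G(P ∩ N) N`.
An element normalizing `P ∩ N` conjugates `D ≤ P ∩ N` into `P`, hence into `D` by strong closure,
and comparing orders it normalizes `D`.
-/

namespace Sylow

variable {p : ℕ} [Fact p.Prime] {G : Type*} [Group G] [Finite (Sylow p G)]

theorem exists_coe_eq_subgroupOf (P : Sylow p G) (N : Subgroup G) [N.Normal] :
    ∃ Q : Sylow p N, (Q : Subgroup N) = (P : Subgroup G).subgroupOf N := by
  obtain ⟨S, hS⟩ := (default : Sylow p N).exists_comap_subtype_eq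
  obtain ⟨h, rfl⟩ := MulAction.exists_smul_eq G S P
  refine ⟨MulAut.conjNormal (H := N) h • default, ?_⟩
  ext x
  rw [coe_subgroup_smul, pointwise_smul_def, ← hS, mem_pointwise_smul_iff_inv_smul_mem,
    mem_subgroupOf, mem_pointwise_smul_iff_inv_smul_mem, mem_comap]
  simp

end Sylow

namespace IsStronglyClosed

variable {G : Type*} [Group G] {P D : Subgroup G}

theorem map_conj_inv_le (hD : IsStronglyClosed P D) {g : G}
    (hg : D.map (MulAut.conj g⁻¹) ≤ P) : D.map (MulAut.conj g⁻¹) ≤ D := by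
  have himage : ((D.map (MulAut.conj g⁻¹) : Subgroup G) : Set G) =
      (fun u => g⁻¹ * u * g) '' D := by
    ext; simp
  simpa only [← SetLike.coe_subset_coe, himage] using hD D le_rfl g (himage ▸ hg)

theorem normalizer_le [Finite D] (hD : IsStronglyClosed P D) {H : Subgroup G} (hDH : D ≤ H)
    (hHP : H ≤ P) : normalizer (H : Set G) ≤ normalizer (D : Set G) := by
  intro g hg
  rw [← inv_mem_iff, mem_normalizer_iff_map_conj_eq] at hg ⊢
  have hle := hD.map_conj_inv_le ((map_mono hDH).trans (hg.le.trans hHP))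
  exact eq_of_le_of_card_ge hle (card_map_of_injective (MulAut.conj g⁻¹).injective).ge

end IsStronglyClosed

/-- If `N` is normal in `G` and `D ≤ N` is a subgroup of `P` strongly closed
in `P` with respect to `G`, then `G = N_G(D)·N`. -/
theorem eq_normalizer_mul_of_stronglyClosed
    {p : ℕ} (hp : p.Prime) {G : Type*} [Group G] [Finite G]
    (P : Sylow p G) (N : Subgroup G) (hN : N.Normal)
    (D : Subgroup G) (hDP : D ≤ (P : Subgroup G)) (hDN : D ≤ N)
    (hD : IsStronglyClosed (P : Subgroup G) D) :
    ∀ g : G, ∃ x ∈ normalizer (D : Set G), ∃ n ∈ N, g = x * n := by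
  have : Fact p.Prime := ⟨hp⟩
  obtain ⟨Q, hQ⟩ := P.exists_coe_eq_subgroupOf N
  have hfrattini := Sylow.normalizer_sup_eq_top Q
  rw [hQ, subgroupOf_map_subtype] at hfrattini
  intro g
  obtain ⟨x, hx, n, hn, rfl⟩ := mem_sup_of_normal_right.mp (hfrattini ▸ mem_top g)
  exact ⟨x, hD.normalizer_le (le_inf hDP hDN) inf_le_left hx, n, hn, rfl⟩
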